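/- For a ≥ 2 and n ≥ 1 with n = 1 or n even, the sequence (S_n(m) mod 2^a)_{m≥1} is periodic with exact period 2^(a+1); that is, S_n(m + 2^(a+1)) ≡ S_n(m) (mod 2^a) for all m ≥ 1, and no smaller positive period works. -/

import Mathlib

/-!
Write `T(a) = ∑_{i < 2^a} i^n`. Splitting the range into two halves and expanding `(2^B + j)^n`
modulo `2^(2B)` gives `T(B+1) ≡ 2 T(B) + n 2^B ∑_{j < 2^B} j^(n-1) [MOD 2^(B+1)]`, and the last
term vanishes when `n` is even, or when `n = 1` (it is then `2^(2B)`); hence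
`T(a+1) ≡ 2^a [MOD 2^(a+1)]`. Any `N` consecutive integers form a complete residue system mod `N`,
so `S_n(m + 2^a) ≡ S_n(m) + 2^(a-1) [MOD 2^a]`: thus `2^(a+1)` is a period and `2^a` is not.
The periods of a sequence are those of a periodic point of the shift, i.e. the multiples of its
minimal period, which therefore is `2^(a+1)`.
-/

def S (n m : ℕ) : ℕ := ∑ i ∈ Finset.Icc 1 m, i ^ n

open Finset Function

lemma add_pow_of_sq_eq_zero {R : Type*} [CommSemiring R] (x : R) {y : R} (hy : y ^ 2 = 0)
    (n : ℕ) : (x + y) ^ n = x ^ n + n * x ^ (n - 1) * y := by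
  obtain ⟨k, hk⟩ := Polynomial.powAddExpansion x y n
  rw [hk, hy, mul_zero, add_zero]

lemma sum_range_natCast_add_eq_sum {M : Type*} [AddCommMonoid M] (N c : ℕ) [NeZero N]
    (f : ZMod N → M) : ∑ j ∈ range N, f ((c + j : ℕ) : ZMod N) = ∑ x, f x := by
  refine sum_nbij' (fun j => ((c + j : ℕ) : ZMod N)) (fun x => (x - c).val) (by simp)
    (fun x _ => mem_range.2 (ZMod.val_lt _)) (fun j hj => ?_) (fun x _ => ?_) (fun _ _ => rfl)
  · simpa using ZMod.val_cast_of_lt (mem_range.1 hj)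
  · simp

lemma sum_range_add_pow_modEq (N c n : ℕ) :
    ∑ j ∈ range N, (c + j) ^ n ≡ ∑ j ∈ range N, j ^ n [MOD N] := by
  rcases N.eq_zero_or_pos with rfl | hN
  · rfl
  have : NeZero N := ⟨hN.ne'⟩
  rw [← ZMod.natCast_eq_natCast_iff]
  simp only [Nat.cast_sum, Nat.cast_pow]
  exact (sum_range_natCast_add_eq_sum N c (· ^ n)).trans
    (by simpa using (sum_range_natCast_add_eq_sum N 0 (· ^ n)).symm)

lemma isPeriodicPt_shift_iff {α : Type*} (u : ℕ → α) (d : ℕ) :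
    IsPeriodicPt (fun v : ℕ → α => fun m => v (m + 1)) d u ↔ ∀ m, u (m + d) = u m := by
  have hiter : ∀ k, (fun v : ℕ → α => fun m => v (m + 1))^[k] u = fun m => u (m + k) := by
    intro k
    induction k with
    | zero => rfl
    | succ k ih => rw [iterate_succ_apply', ih]; ext m; exact congrArg u (by omega)
  rw [IsPeriodicPt, IsFixedPt, hiter, funext_iff]

theorem Function.IsPeriodicPt.prime_pow_succ_le {α : Type*} {f : α → α} {x : α} {p k d : ℕ}
    (hp : p.Prime) (hsucc : IsPeriodicPt f (p ^ (k + 1)) x) (hk : ¬IsPeriodicPt f (p ^ k) x)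
    (hd : 0 < d) (hdx : IsPeriodicPt f d x) : p ^ (k + 1) ≤ d := by
  rw [← Nat.eq_prime_pow_of_dvd_least_prime_pow hp (mt isPeriodicPt_iff_minimalPeriod_dvd.2 hk)
    hsucc.minimalPeriod_dvd]
  exact hdx.minimalPeriod_le hd

lemma sum_range_two_pow_succ_pow_modEq {n B : ℕ} (h : n = 1 ∨ Even n) (hB : 1 ≤ B) :
    ∑ i ∈ range (2 ^ (B + 1)), i ^ n ≡ 2 * ∑ i ∈ range (2 ^ B), i ^ n [MOD 2 ^ (B + 1)] := by
  have hsplit : ∑ i ∈ range (2 ^ (B + 1)), i ^ n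
      = ∑ i ∈ range (2 ^ B), i ^ n + ∑ j ∈ range (2 ^ B), (2 ^ B + j) ^ n := by
    rw [pow_succ, mul_two, sum_range_add]
  have hc_sq : ((2 : ZMod (2 ^ (B + 1))) ^ B) ^ 2 = 0 := by
    rw [← pow_mul]
    exact_mod_cast (ZMod.natCast_eq_zero_iff _ _).2 (pow_dvd_pow 2 (by omega : B + 1 ≤ B * 2))
  have hn_c : n = 1 ∨ (n : ZMod (2 ^ (B + 1))) * 2 ^ B = 0 := by
    refine h.imp_right fun ⟨k, hk⟩ => ?_
    have hdvd : 2 ^ (B + 1) ∣ n * 2 ^ B := ⟨k, by rw [hk]; ring⟩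
    exact_mod_cast (ZMod.natCast_eq_zero_iff _ _).2 hdvd
  rw [← ZMod.natCast_eq_natCast_iff, hsplit]
  set c : ZMod (2 ^ (B + 1)) := 2 ^ B
  have hcorr : ∑ j ∈ range (2 ^ B), (n : ZMod (2 ^ (B + 1))) * j ^ (n - 1) * c = 0 := by
    rcases hn_c with rfl | hnc
    · simp only [Nat.cast_one, one_mul, Nat.sub_self, pow_zero, sum_const, card_range,
        nsmul_eq_mul, Nat.cast_pow, Nat.cast_ofNat]
      exact (sq c).symm.trans hc_sq
    · simp only [mul_right_comm _ _ c, hnc, zero_mul, sum_const_zero]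
  calc ((∑ i ∈ range (2 ^ B), i ^ n + ∑ j ∈ range (2 ^ B), (2 ^ B + j) ^ n : ℕ) : ZMod _)
      = ∑ i ∈ range (2 ^ B), (i : ZMod _) ^ n + ∑ j ∈ range (2 ^ B), (c + j) ^ n := by
        push_cast; rfl
    _ = ∑ i ∈ range (2 ^ B), (i : ZMod _) ^ n + ∑ j ∈ range (2 ^ B), (j : ZMod _) ^ n := by
        simp only [add_comm c, add_pow_of_sq_eq_zero _ hc_sq, sum_add_distrib, hcorr, add_zero]
    _ = ((2 * ∑ i ∈ range (2 ^ B), i ^ n : ℕ) : ZMod (2 ^ (B + 1))) := by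
        push_cast; ring

lemma sum_range_two_pow_pow_modEq {n : ℕ} (hn : 1 ≤ n) (h : n = 1 ∨ Even n) (a : ℕ) :
    ∑ i ∈ range (2 ^ (a + 1)), i ^ n ≡ 2 ^ a [MOD 2 ^ (a + 1)] := by
  induction a with
  | zero => simp [sum_range_succ, Nat.zero_pow hn]; rfl
  | succ a ih =>
    have hdouble := ih.mul_left' 2
    rw [← pow_succ' 2 a, ← pow_succ' 2 (a + 1)] at hdouble
    exact (sum_range_two_pow_succ_pow_modEq h (by omega)).trans hdouble

lemma S_eq_sum_range (n m : ℕ) : S n m = ∑ i ∈ range m, (i + 1) ^ n := by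
  induction m with
  | zero => rfl
  | succ m ih => rw [S, sum_Icc_succ_top (by omega), ← S, ih, sum_range_succ]

lemma S_add (n m k : ℕ) : S n (m + k) = S n m + ∑ j ∈ range k, (m + 1 + j) ^ n := by
  simp only [S_eq_sum_range, sum_range_add, add_right_comm]

lemma S_add_two_pow_modEq {n : ℕ} (hn : 1 ≤ n) (h : n = 1 ∨ Even n) (b m : ℕ) :
    S n (m + 2 ^ (b + 1)) ≡ S n m + 2 ^ b [MOD 2 ^ (b + 1)] := by
  rw [S_add]
  exact .add_left _ ((sum_range_add_pow_modEq _ _ _).trans (sum_range_two_pow_pow_modEq hn h b))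

lemma isPeriodicPt_shift_natCast_S_iff (n N d : ℕ) :
    IsPeriodicPt (fun v : ℕ → ZMod N => fun m => v (m + 1)) d (fun m => (S n (m + 1) : ZMod N)) ↔
      ∀ m, 1 ≤ m → S n (m + d) ≡ S n m [MOD N] := by
  simp only [isPeriodicPt_shift_iff, ZMod.natCast_eq_natCast_iff]
  refine ⟨fun hu m hm => ?_, fun hS m => ?_⟩
  · obtain ⟨m, rfl⟩ : ∃ k, m = k + 1 := ⟨m - 1, by omega⟩
    simpa only [add_right_comm] using hu m
  · simpa only [add_right_comm] using hS (m + 1) (by omega)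

theorem stmt12 (a n : ℕ) (ha : 2 ≤ a) (hn : 1 ≤ n) (h : n = 1 ∨ Even n) :
    (∀ m, 1 ≤ m → S n (m + 2 ^ (a + 1)) ≡ S n m [MOD 2 ^ a]) ∧
    ∀ d, 0 < d → d < 2 ^ (a + 1) →
      ¬ (∀ m, 1 ≤ m → S n (m + d) ≡ S n m [MOD 2 ^ a]) := by
  obtain ⟨b, rfl⟩ : ∃ b, a = b + 1 := ⟨a - 1, by omega⟩
  have hstep := S_add_two_pow_modEq hn h b
  have hperiod : ∀ m, 1 ≤ m → S n (m + 2 ^ (b + 1 + 1)) ≡ S n m [MOD 2 ^ (b + 1)] := fun m _ =>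
    calc S n (m + 2 ^ (b + 1 + 1)) = S n (m + 2 ^ (b + 1) + 2 ^ (b + 1)) := by ring_nf
      _ ≡ S n m + 2 ^ b + 2 ^ b [MOD 2 ^ (b + 1)] := (hstep _).trans ((hstep m).add_right _)
      _ = S n m + 2 ^ (b + 1) := by ring
      _ ≡ S n m [MOD 2 ^ (b + 1)] := Nat.add_modEq_right
  have hnot : ¬∀ m, 1 ≤ m → S n (m + 2 ^ (b + 1)) ≡ S n m [MOD 2 ^ (b + 1)] := fun hS =>
    have h2b : 2 ^ b ≡ 0 [MOD 2 ^ (b + 1)] :=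
      .add_left_cancel' (S n 1) ((hstep 1).symm.trans (hS 1 le_rfl))
    absurd (Nat.modEq_zero_iff_dvd.1 h2b)
      ((Nat.pow_dvd_pow_iff_le_right one_lt_two).not.2 (by omega))
  refine ⟨hperiod, fun d hd hlt hS => hlt.not_ge ?_⟩
  simp only [← isPeriodicPt_shift_natCast_S_iff] at hperiod hnot hS
  exact hperiod.prime_pow_succ_le Nat.prime_two hnot hd hS
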